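/- (Moving a point by a controlled homeomorphism) Let p ≥ 1, D a domain in ℝⁿ (n ≥ 2), a₀, a₀′ ∈ D, and D₀ ⊂ D a subdomain containing a₀ and a₀′. Then there exists a homeomorphism f: D̄ → D̄ and a constant K_{n,p} > 0 depending only on n and p (and on D₀, a₀, a₀′) such that M_p(f(Γ)) ≤ K_{n,p} · M_p(Γ) for every path family Γ in D, f(a₀) = a₀′, and f(x) = x for all x ∈ D̄ \ D₀. -/

import Mathlib

open MeasureTheory Set ENNReal

noncomputable section

/-- Euclidean `n`-space. -/
abbrev Eucl (n : ℕ) := EuclideanSpace ℝ (Fin n)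

/-- The line integral of a Borel density `ρ` along a path `γ` parametrized on `[0,1]`. -/
def pathLIntegral {n : ℕ} (ρ : Eucl n → ℝ≥0∞) (γ : ℝ → Eucl n) : ℝ≥0∞ :=
  ∫⁻ t in Icc (0:ℝ) 1, ρ (γ t) * ENNReal.ofReal ‖deriv γ t‖

/-- The length of a path `γ` parametrized on `[0,1]`. -/
def pathLength {n : ℕ} (γ : ℝ → Eucl n) : ℝ≥0∞ :=
  ∫⁻ t in Icc (0:ℝ) 1, ENNReal.ofReal ‖deriv γ t‖

/-- A density `ρ` is admissible for the path family `Γ`. -/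
def IsAdmissible {n : ℕ} (Γ : Set (ℝ → Eucl n)) (ρ : Eucl n → ℝ≥0∞) : Prop :=
  Measurable ρ ∧ ∀ γ ∈ Γ, 1 ≤ pathLIntegral ρ γ

/-- The `p`-modulus of a family of paths `Γ` in `ℝⁿ`. -/
def pModulus {n : ℕ} (p : ℝ) (Γ : Set (ℝ → Eucl n)) : ℝ≥0∞ :=
  ⨅ (ρ : Eucl n → ℝ≥0∞) (_ : IsAdmissible Γ ρ), ∫⁻ x, ρ x ^ p

/-- The family of all paths joining `E₀` and `E₁` in `D`. -/
def JoinPaths {n : ℕ} (E₀ E₁ D : Set (Eucl n)) : Set (ℝ → Eucl n) :=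
  {γ | ContinuousOn γ (Icc 0 1) ∧ (∀ t ∈ Icc (0:ℝ) 1, γ t ∈ D) ∧ γ 0 ∈ E₀ ∧ γ 1 ∈ E₁}

/-- The minimal stretch `l(A) = min_{|h|=1} ‖A h‖` of a linear map. -/
def minStretch {n : ℕ} (A : Eucl n →L[ℝ] Eucl n) : ℝ :=
  sInf {r | ∃ h : Eucl n, ‖h‖ = 1 ∧ ‖A h‖ = r}

open Classical in
/-- The inner dilatation of order `p` of `f` at `x`. -/
def KIdil {n : ℕ} (p : ℝ) (f : Eucl n → Eucl n) (x : Eucl n) : ℝ≥0∞ :=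
  if (fderiv ℝ f x).det ≠ 0 then
    ENNReal.ofReal (|(fderiv ℝ f x).det| / (minStretch (fderiv ℝ f x)) ^ p)
  else if fderiv ℝ f x = 0 then 1 else ⊤

open Classical in
/-- The outer dilatation of order `p` of `f` at `x`. -/
def KOdil {n : ℕ} (p : ℝ) (f : Eucl n → Eucl n) (x : Eucl n) : ℝ≥0∞ :=
  if (fderiv ℝ f x).det ≠ 0 then
    ENNReal.ofReal (‖fderiv ℝ f x‖ ^ p / |(fderiv ℝ f x).det|)
  else if fderiv ℝ f x = 0 then 1 else ⊤

end

/-!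
Moving one point of a connected open set `D₀` to another is done by composing finitely many
shears `x ↦ x + φ x • v`, where `φ` is a bump function supported in a small ball inside `D₀` and
`v` is so short that `Lip(φ) ‖v‖ < 1`: such a shear is a `C¹` diffeomorphism of `ℝⁿ` that is the
identity off a compact subset of `D₀`, and it moves the centre of the bump to any point close
enough to it. Since maps of this kind form a group, the points reachable from a given one form a
set that is open and closed in `D₀`, hence all of `D₀`.

A `C¹` diffeomorphism `h` that is the identity off a compact set has `‖(h⁻¹)'‖ ≤ L` and
`|det h'| ≤ M` everywhere. If `ρ` is admissible for `Γ`, then `L · ρ ∘ h⁻¹` is admissible for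
`h(Γ)`, and by the change of variables formula its `p`-th power has integral at most
`L ^ p M ∫ ρ ^ p`.
-/

open Filter Topology Metric

section Shear

variable {E : Type*} [NormedAddCommGroup E] [NormedSpace ℝ E] [CompleteSpace E]

theorem exists_continuousLinearEquiv_coe_eq_one_add {A : E →L[ℝ] E} (hA : ‖A‖ < 1) :
    ∃ e : E ≃L[ℝ] E, (e : E →L[ℝ] E) = 1 + A :=
  ⟨ContinuousLinearEquiv.unitsEquiv ℝ E (Units.oneSub (-A) (by rwa [norm_neg])), by
    ext x
    simp [Units.val_oneSub]⟩

theorem exists_homeomorph_add_smul {φ : E → ℝ} (hφ : ContDiff ℝ 1 φ) {L : ℝ}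
    (hL : ∀ x, ‖fderiv ℝ φ x‖ ≤ L) {v : E} (hv : L * ‖v‖ < 1) :
    ∃ h : E ≃ₜ E, (∀ x, h x = x + φ x • v) ∧ ContDiff ℝ 1 h ∧ ContDiff ℝ 1 h.symm := by
  have hφd : Differentiable ℝ φ := hφ.differentiable one_ne_zero
  have hLv : 0 ≤ L * ‖v‖ := mul_nonneg ((norm_nonneg _).trans (hL 0)) (norm_nonneg v)
  have happrox : ApproximatesLinearOn (fun x => x + φ x • v)
      ((ContinuousLinearEquiv.refl ℝ E : E ≃L[ℝ] E) : E →L[ℝ] E) univ ⟨L * ‖v‖, hLv⟩ := by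
    intro x _ y _
    have hφxy : ‖φ x - φ y‖ ≤ L * ‖x - y‖ :=
      convex_univ.norm_image_sub_le_of_norm_fderiv_le (fun z _ => hφd z) (fun z _ => hL z)
        (mem_univ y) (mem_univ x)
    calc ‖x + φ x • v - (y + φ y • v) - (x - y)‖ = ‖φ x - φ y‖ * ‖v‖ := by
          rw [← norm_smul, sub_smul]
          congr 1
          abel
      _ ≤ L * ‖v‖ * ‖x - y‖ := by nlinarith [norm_nonneg v]
  have hsmall : Subsingleton E ∨
      (⟨L * ‖v‖, hLv⟩ : NNReal) < ‖((ContinuousLinearEquiv.refl ℝ E).symm : E →L[ℝ] E)‖₊⁻¹ := by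
    rcases subsingleton_or_nontrivial E with hE | hE
    · exact Or.inl hE
    · right
      rw [ContinuousLinearEquiv.refl_symm, ContinuousLinearEquiv.coe_refl,
        ContinuousLinearMap.nnnorm_id, inv_one]
      exact hv
  have hderiv : ∀ x, ∃ e : E ≃L[ℝ] E,
      HasFDerivAt (fun x => x + φ x • v) (e : E →L[ℝ] E) x := by
    intro x
    obtain ⟨e, he⟩ := exists_continuousLinearEquiv_coe_eq_one_add (A := (fderiv ℝ φ x).smulRight v)
      (by rw [ContinuousLinearMap.norm_smulRight_apply]
          exact (mul_le_mul_of_nonneg_right (hL x) (norm_nonneg v)).trans_lt hv)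
    exact ⟨e, he ▸ (hasFDerivAt_id x).add ((hφd x).hasFDerivAt.smul_const v)⟩
  choose e he using hderiv
  let h := happrox.toHomeomorph _ hsmall
  have hcd : ContDiff ℝ 1 h := contDiff_id.add (hφ.smul contDiff_const)
  exact ⟨h, fun _ => rfl, hcd, h.contDiff_symm he hcd⟩

end Shear

theorem Continuous.exists_pos_forall_le_of_eqOn_compl {X : Type*} [TopologicalSpace X]
    {F : X → ℝ} (hF : Continuous F) {K : Set X} (hK : IsCompact K) {c : ℝ}
    (hc : EqOn F (fun _ => c) Kᶜ) : ∃ C > 0, ∀ x, F x ≤ C := by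
  obtain ⟨C, hC⟩ := hK.bddAbove_image hF.continuousOn
  refine ⟨max (max C c) 1, by positivity, fun x => ?_⟩
  by_cases hx : x ∈ K
  · exact (hC (mem_image_of_mem F hx)).trans ((le_max_left _ _).trans (le_max_left _ _))
  · exact (hc hx).le.trans ((le_max_right _ _).trans (le_max_left _ _))

section SupportedDiffeo

variable {E : Type*} [NormedAddCommGroup E] [NormedSpace ℝ E]

structure IsC1DiffeoSupportedIn (s : Set E) (h : E ≃ₜ E) : Prop where
  contDiff : ContDiff ℝ 1 h
  contDiff_symm : ContDiff ℝ 1 h.symm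
  exists_isCompact_eqOn : ∃ K ⊆ s, IsCompact K ∧ EqOn h id Kᶜ

namespace IsC1DiffeoSupportedIn

variable {s : Set E} {h : E ≃ₜ E}

theorem symm (hh : IsC1DiffeoSupportedIn s h) : IsC1DiffeoSupportedIn s h.symm := by
  obtain ⟨K, hKs, hK, hKh⟩ := hh.exists_isCompact_eqOn
  exact ⟨hh.contDiff_symm, hh.contDiff, K, hKs, hK, fun x hx => h.symm_apply_eq.mpr (hKh hx).symm⟩

theorem trans {h' : E ≃ₜ E} (hh : IsC1DiffeoSupportedIn s h) (hh' : IsC1DiffeoSupportedIn s h') :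
    IsC1DiffeoSupportedIn s (h.trans h') := by
  obtain ⟨K, hKs, hK, hKh⟩ := hh.exists_isCompact_eqOn
  obtain ⟨K', hK's, hK', hK'h⟩ := hh'.exists_isCompact_eqOn
  refine ⟨hh'.contDiff.comp hh.contDiff, hh.contDiff_symm.comp hh'.contDiff_symm,
    K ∪ K', union_subset hKs hK's, hK.union hK', fun x hx => ?_⟩
  rw [mem_compl_iff, mem_union, not_or] at hx
  rw [Homeomorph.trans_apply, hKh hx.1, id, hK'h hx.2, id]

theorem apply_eq_of_notMem (hh : IsC1DiffeoSupportedIn s h) {x : E} (hx : x ∉ s) : h x = x := by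
  obtain ⟨K, hKs, -, hKh⟩ := hh.exists_isCompact_eqOn
  exact hKh fun hK => hx (hKs hK)

theorem mapsTo_of_subset (hh : IsC1DiffeoSupportedIn s h) {t : Set E} (hst : s ⊆ t) :
    MapsTo h t t := by
  intro x hx
  by_cases hhx : h x ∈ s
  · exact hst hhx
  · rwa [h.injective (hh.apply_eq_of_notMem hhx)]

theorem image_eq_of_subset (hh : IsC1DiffeoSupportedIn s h) {t : Set E} (hst : s ⊆ t) :
    h '' t = t :=
  (hh.mapsTo_of_subset hst).image_subset.antisymm fun y hy =>
    ⟨h.symm y, hh.symm.mapsTo_of_subset hst hy, h.apply_symm_apply y⟩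

theorem exists_isCompact_fderiv_eq_one (hh : IsC1DiffeoSupportedIn s h) :
    ∃ K, IsCompact K ∧ EqOn (fderiv ℝ h) (fun _ => 1) Kᶜ := by
  obtain ⟨K, -, hK, hKh⟩ := hh.exists_isCompact_eqOn
  refine ⟨K, hK, fun x hx => ?_⟩
  have hid : (h : E → E) =ᶠ[𝓝 x] id :=
    eventually_of_mem (hK.isClosed.isOpen_compl.mem_nhds hx) fun _ hy => hKh hy
  rw [hid.fderiv_eq, fderiv_id]
  rfl

theorem exists_pos_forall_norm_fderiv_le (hh : IsC1DiffeoSupportedIn s h) :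
    ∃ L > 0, ∀ x, ‖fderiv ℝ h x‖ ≤ L := by
  obtain ⟨K, hK, hKh⟩ := hh.exists_isCompact_fderiv_eq_one
  exact (hh.contDiff.continuous_fderiv one_ne_zero).norm.exists_pos_forall_le_of_eqOn_compl hK
    fun _ hx => congrArg norm (hKh hx)

theorem exists_pos_forall_abs_det_fderiv_le (hh : IsC1DiffeoSupportedIn s h) :
    ∃ M > 0, ∀ x, |(fderiv ℝ h x).det| ≤ M := by
  obtain ⟨K, hK, hKh⟩ := hh.exists_isCompact_fderiv_eq_one
  exact (ContinuousLinearMap.continuous_det.comp (hh.contDiff.continuous_fderiv one_ne_zero)).abs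
    |>.exists_pos_forall_le_of_eqOn_compl hK fun _ hx => congrArg (|·.det|) (hKh hx)

end IsC1DiffeoSupportedIn

end SupportedDiffeo

section Moving

variable {E : Type*} [NormedAddCommGroup E] [NormedSpace ℝ E] [FiniteDimensional ℝ E]

theorem eventually_exists_isC1DiffeoSupportedIn_apply_eq {s : Set E} {c : E} (hs : s ∈ 𝓝 c) :
    ∀ᶠ b in 𝓝 c, ∃ h, IsC1DiffeoSupportedIn s h ∧ h c = b := by
  obtain ⟨ε, hε, hball⟩ := Metric.mem_nhds_iff.mp hs
  let φ : ContDiffBump c := ⟨ε / 4, ε / 2, by positivity, by linarith⟩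
  obtain ⟨L, hL⟩ := (φ.hasCompactSupport.fderiv ℝ).exists_bound_of_continuous
    (φ.contDiff.continuous_fderiv one_ne_zero)
  have hL0 : 0 ≤ L := (norm_nonneg _).trans (hL c)
  filter_upwards [ball_mem_nhds c (inv_pos.mpr (by linarith : 0 < L + 1))] with b hb
  have hv : L * ‖b - c‖ < 1 := by
    rw [mem_ball, dist_eq_norm] at hb
    have : (L + 1) * ‖b - c‖ < 1 :=
      calc (L + 1) * ‖b - c‖ < (L + 1) * (L + 1)⁻¹ := mul_lt_mul_of_pos_left hb (by linarith)
        _ = 1 := mul_inv_cancel₀ (by linarith)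
    nlinarith [norm_nonneg (b - c)]
  obtain ⟨h, hh, hcd, hcds⟩ := exists_homeomorph_add_smul φ.contDiff hL hv
  refine ⟨h, ⟨hcd, hcds, closedBall c (ε / 2),
    (closedBall_subset_ball (by linarith)).trans hball, isCompact_closedBall c _, fun x hx => ?_⟩, ?_⟩
  · rw [hh, id, φ.zero_of_le_dist (le_of_lt (not_le.mp hx)), zero_smul, add_zero]
  · rw [hh, φ.one_of_mem_closedBall (mem_closedBall_self (by positivity)), one_smul,
      add_sub_cancel]

theorem exists_isC1DiffeoSupportedIn_apply_eq {s : Set E} (hs : IsOpen s)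
    (hs' : IsPreconnected s) {a b : E} (ha : a ∈ s) (hb : b ∈ s) :
    ∃ h, IsC1DiffeoSupportedIn s h ∧ h a = b := by
  refine hs'.induction₂ (fun a b => ∃ h, IsC1DiffeoSupportedIn s h ∧ h a = b)
    (fun x hx => eventually_nhdsWithin_of_eventually_nhds
      (eventually_exists_isC1DiffeoSupportedIn_apply_eq (hs.mem_nhds hx)))
    ?_ ?_ ha hb
  · rintro x y z - - - ⟨h, hh, rfl⟩ ⟨h', hh', rfl⟩
    exact ⟨h.trans h', hh.trans hh', rfl⟩
  · rintro x y - - ⟨h, hh, rfl⟩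
    exact ⟨h.symm, hh.symm, h.symm_apply_apply x⟩

end Moving

theorem norm_deriv_comp_le {E F : Type*} [NormedAddCommGroup E] [NormedSpace ℝ E]
    [NormedAddCommGroup F] [NormedSpace ℝ F] {f : E → F} {g : F → E} (hf : Differentiable ℝ f)
    (hg : Differentiable ℝ g) (hgf : Function.LeftInverse g f) {L : ℝ}
    (hL : ∀ x, ‖fderiv ℝ f x‖ ≤ L) (γ : ℝ → E) (t : ℝ) :
    ‖deriv (f ∘ γ) t‖ ≤ L * ‖deriv γ t‖ := by
  by_cases hγ : DifferentiableAt ℝ γ t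
  · rw [fderiv_comp_deriv t (hf _) hγ]
    exact ((fderiv ℝ f (γ t)).le_opNorm _).trans
      (mul_le_mul_of_nonneg_right (hL _) (norm_nonneg _))
  · -- `γ = g ∘ (f ∘ γ)`, so `f ∘ γ` is not differentiable at `t` either
    have hfγ : ¬ DifferentiableAt ℝ (f ∘ γ) t := fun hfγ =>
      hγ (by simpa [Function.comp_def, hgf _] using (hg _).comp t hfγ)
    rw [deriv_zero_of_not_differentiableAt hfγ, norm_zero]
    exact mul_nonneg ((norm_nonneg _).trans (hL 0)) (norm_nonneg _)

theorem Homeomorph.lintegral_comp_symm_le {E : Type*} [NormedAddCommGroup E] [NormedSpace ℝ E]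
    [FiniteDimensional ℝ E] [MeasurableSpace E] [BorelSpace E] (μ : Measure E)
    [μ.IsAddHaarMeasure] (h : E ≃ₜ E) (hd : Differentiable ℝ h) {M : ℝ}
    (hM : ∀ x, |(fderiv ℝ h x).det| ≤ M) (ρ : E → ℝ≥0∞) :
    ∫⁻ y, ρ (h.symm y) ∂μ ≤ ENNReal.ofReal M * ∫⁻ x, ρ x ∂μ := by
  have hcov := lintegral_image_eq_lintegral_abs_det_fderiv_mul μ MeasurableSet.univ
    (fun x _ => (hd x).hasFDerivAt.hasFDerivWithinAt) h.injective.injOn (ρ ∘ h.symm)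
  rw [image_univ, h.range_coe, Measure.restrict_univ] at hcov
  rw [← lintegral_const_mul' _ _ ofReal_ne_top]
  calc ∫⁻ y, ρ (h.symm y) ∂μ = ∫⁻ x, ENNReal.ofReal |(fderiv ℝ h x).det| * ρ x ∂μ := by
        simpa using hcov
    _ ≤ ∫⁻ x, ENNReal.ofReal M * ρ x ∂μ := by gcongr with x; exact hM x

section Modulus

variable {n : ℕ}

theorem pModulus_le_mul_of_forall_isAdmissible {p : ℝ} {Γ Γ' : Set (ℝ → Eucl n)}
    {C : ℝ≥0∞} (hC₀ : C ≠ 0) (hC : C ≠ ∞)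
    (H : ∀ ρ, IsAdmissible Γ ρ → pModulus p Γ' ≤ C * ∫⁻ x, ρ x ^ p) :
    pModulus p Γ' ≤ C * pModulus p Γ := by
  calc pModulus p Γ' ≤ ⨅ (ρ) (_ : IsAdmissible Γ ρ), C * ∫⁻ x, ρ x ^ p := le_iInf₂ H
    _ = C * pModulus p Γ := by simp_rw [pModulus, ENNReal.mul_iInf_of_ne hC₀ hC]

theorem IsAdmissible.image_comp {Γ : Set (ℝ → Eucl n)} {ρ : Eucl n → ℝ≥0∞}
    (hρ : IsAdmissible Γ ρ) (h : Eucl n ≃ₜ Eucl n) (hd : Differentiable ℝ h)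
    (hds : Differentiable ℝ h.symm) {L : ℝ} (hL : ∀ x, ‖fderiv ℝ h.symm x‖ ≤ L) :
    IsAdmissible ((fun γ => h ∘ γ) '' Γ) (fun y => ENNReal.ofReal L * ρ (h.symm y)) := by
  refine ⟨measurable_const.mul (hρ.1.comp h.symm.continuous.measurable), ?_⟩
  rintro _ ⟨γ, hγ, rfl⟩
  refine (hρ.2 γ hγ).trans (lintegral_mono fun t => ?_)
  have hderiv : ‖deriv γ t‖ ≤ L * ‖deriv (h ∘ γ) t‖ := by
    simpa [← Function.comp_assoc] using
      norm_deriv_comp_le hds hd h.apply_symm_apply hL (h ∘ γ) t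
  calc ρ (γ t) * ENNReal.ofReal ‖deriv γ t‖
      ≤ ρ (γ t) * ENNReal.ofReal (L * ‖deriv (h ∘ γ) t‖) := by gcongr
    _ = ENNReal.ofReal L * ρ (h.symm (h (γ t))) * ENNReal.ofReal ‖deriv (h ∘ γ) t‖ := by
        rw [h.symm_apply_apply, ENNReal.ofReal_mul ((norm_nonneg _).trans (hL 0))]
        ring

theorem pModulus_image_comp_le (h : Eucl n ≃ₜ Eucl n) (hd : Differentiable ℝ h)
    (hds : Differentiable ℝ h.symm) {L M : ℝ} (hL₀ : 0 < L) (hL : ∀ x, ‖fderiv ℝ h.symm x‖ ≤ L)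
    (hM₀ : 0 < M) (hM : ∀ x, |(fderiv ℝ h x).det| ≤ M) (p : ℝ) (Γ : Set (ℝ → Eucl n)) :
    pModulus p ((fun γ => h ∘ γ) '' Γ) ≤ ENNReal.ofReal (L ^ p * M) * pModulus p Γ := by
  refine pModulus_le_mul_of_forall_isAdmissible (by positivity) ofReal_ne_top fun ρ hρ => ?_
  calc pModulus p ((fun γ => h ∘ γ) '' Γ)
      ≤ ∫⁻ y, (ENNReal.ofReal L * ρ (h.symm y)) ^ p := iInf₂_le _ (hρ.image_comp h hd hds hL)
    _ = ENNReal.ofReal (L ^ p) * ∫⁻ y, ρ (h.symm y) ^ p := by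
        rw [← ofReal_rpow_of_pos hL₀, ← lintegral_const_mul' _ _ (by simp [hL₀])]
        simp [mul_rpow_eq_ite, hL₀.not_ge]
    _ ≤ ENNReal.ofReal (L ^ p) * (ENNReal.ofReal M * ∫⁻ x, ρ x ^ p) := by
        gcongr
        exact h.lintegral_comp_symm_le volume hd hM fun x => ρ x ^ p
    _ = ENNReal.ofReal (L ^ p * M) * ∫⁻ x, ρ x ^ p := by
        rw [ENNReal.ofReal_mul (by positivity), mul_assoc]

theorem IsC1DiffeoSupportedIn.exists_pModulus_image_comp_le {s : Set (Eucl n)}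
    {h : Eucl n ≃ₜ Eucl n} (hh : IsC1DiffeoSupportedIn s h) (p : ℝ) :
    ∃ K > 0, ∀ Γ : Set (ℝ → Eucl n),
      pModulus p ((fun γ => h ∘ γ) '' Γ) ≤ ENNReal.ofReal K * pModulus p Γ := by
  obtain ⟨L, hL₀, hL⟩ := hh.symm.exists_pos_forall_norm_fderiv_le
  obtain ⟨M, hM₀, hM⟩ := hh.exists_pos_forall_abs_det_fderiv_le
  exact ⟨L ^ p * M, by positivity, pModulus_image_comp_le h
    (hh.contDiff.differentiable one_ne_zero) (hh.contDiff_symm.differentiable one_ne_zero)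
    hL₀ hL hM₀ hM p⟩

end Modulus

theorem exists_controlled_homeo_moving_point_general {n : ℕ} (p : ℝ)
    (D : Set (Eucl n))
    (D₀ : Set (Eucl n)) (hD₀ : IsOpen D₀) (hD₀c : IsConnected D₀) (hD₀D : D₀ ⊆ D)
    (a₀ a₀' : Eucl n) (ha₀ : a₀ ∈ D₀) (ha₀' : a₀' ∈ D₀) :
    ∃ (f g : Eucl n → Eucl n) (K : ℝ), 0 < K ∧
      ContinuousOn f (closure D) ∧ ContinuousOn g (closure D) ∧
      f '' closure D = closure D ∧
      (∀ x ∈ closure D, g (f x) = x) ∧ (∀ x ∈ closure D, f (g x) = x) ∧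
      f a₀ = a₀' ∧
      (∀ x ∈ closure D \ D₀, f x = x) ∧
      ∀ Γ : Set (ℝ → Eucl n), (∀ γ ∈ Γ, ∀ t ∈ Icc (0:ℝ) 1, γ t ∈ D) →
        pModulus p ((fun γ => f ∘ γ) '' Γ) ≤ ENNReal.ofReal K * pModulus p Γ := by
  obtain ⟨h, hh, hha⟩ :=
    exists_isC1DiffeoSupportedIn_apply_eq hD₀ hD₀c.isPreconnected ha₀ ha₀'
  obtain ⟨K, hK, hmod⟩ := hh.exists_pModulus_image_comp_le p
  exact ⟨h, h.symm, K, hK, h.continuous.continuousOn, h.symm.continuous.continuousOn,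
    hh.image_eq_of_subset (hD₀D.trans subset_closure), fun x _ => h.symm_apply_apply x,
    fun x _ => h.apply_symm_apply x, hha, fun x hx => hh.apply_eq_of_notMem hx.2,
    fun Γ _ => hmod Γ⟩

/-- Moving a point by a controlled homeomorphism: given a subdomain `D₀ ⊆ D` containing
`a₀` and `a₀'`, there exist a homeomorphism `f` of `closure D` onto itself (with inverse
`g`) and a constant `K > 0` such that `f(a₀) = a₀'`, `f = id` off `D₀`, and
`M_p(f(Γ)) ≤ K · M_p(Γ)` for every family `Γ` of paths in `D`. -/
theorem exists_controlled_homeo_moving_point {n : ℕ} (hn : 2 ≤ n) (p : ℝ) (hp : 1 ≤ p)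
    (D : Set (Eucl n)) (hD : IsOpen D) (hDc : IsConnected D)
    (D₀ : Set (Eucl n)) (hD₀ : IsOpen D₀) (hD₀c : IsConnected D₀) (hD₀D : D₀ ⊆ D)
    (a₀ a₀' : Eucl n) (ha₀ : a₀ ∈ D₀) (ha₀' : a₀' ∈ D₀) :
    ∃ (f g : Eucl n → Eucl n) (K : ℝ), 0 < K ∧
      ContinuousOn f (closure D) ∧ ContinuousOn g (closure D) ∧
      f '' closure D = closure D ∧
      (∀ x ∈ closure D, g (f x) = x) ∧ (∀ x ∈ closure D, f (g x) = x) ∧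
      f a₀ = a₀' ∧
      (∀ x ∈ closure D \ D₀, f x = x) ∧
      ∀ Γ : Set (ℝ → Eucl n), (∀ γ ∈ Γ, ∀ t ∈ Icc (0:ℝ) 1, γ t ∈ D) →
        pModulus p ((fun γ => f ∘ γ) '' Γ) ≤ ENNReal.ofReal K * pModulus p Γ :=
  exists_controlled_homeo_moving_point_general p D D₀ hD₀ hD₀c hD₀D a₀ a₀' ha₀ ha₀'
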